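/- The distance-induced kernel associated with the energy distance recovers the energy distance as a squared MMD: for a semimetric ρ of negative type on X, base point z₀ ∈ X, and kernel k(x,y) = ½[ρ(x,z₀) + ρ(y,z₀) − ρ(x,y)], the squared MMD with kernel k satisfies MMD²(P,Q) = E ρ(X,Y) − ½ E ρ(X,X') − ½ E ρ(Y,Y') where X,X' ∼ P i.i.d. and Y,Y' ∼ Q i.i.d., for all probability measures P, Q with ∫ρ(z,z₀)dP(z), ∫ρ(z,z₀)dQ(z) < ∞. -/

import Mathlib

/-!
For probability measures `μ, ν` with finite first moments, integrating
`k(x,y) = (ρ(x,z₀) + ρ(y,z₀) - ρ(x,y)) / 2` against `μ ⊗ ν` gives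
`(∫ ρ(·,z₀) dμ + ∫ ρ(·,z₀) dν - ∫ ρ d(μ ⊗ ν)) / 2`; in the MMD combination of the pairs
`(P,P)`, `(Q,Q)`, `(P,Q)` the moment terms cancel. The integrability of `ρ` comes from negative
type at the points `x, y, z₀` with weights `1, 1, -2`: `ρ(x,y) ≤ 2ρ(x,z₀) + 2ρ(y,z₀)`.
-/

open MeasureTheory

namespace EnergyDistance

variable {X : Type*}

def IsNegativeType (ρ : X → X → ℝ) : Prop :=
  ∀ (n : ℕ), 2 ≤ n → ∀ (x : Fin n → X) (a : Fin n → ℝ),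
    (∑ i, a i) = 0 → (∑ i, ∑ j, a i * a j * ρ (x i) (x j)) ≤ 0

noncomputable def distanceKernel (ρ : X → X → ℝ) (z₀ x y : X) : ℝ :=
  (ρ x z₀ + ρ y z₀ - ρ x y) / 2

theorem IsNegativeType.le_two_mul_add_two_mul {ρ : X → X → ℝ} (hρ : IsNegativeType ρ)
    (hself : ∀ x, ρ x x = 0) (hsymm : ∀ x y, ρ x y = ρ y x) (x y z : X) :
    ρ x y ≤ 2 * ρ x z + 2 * ρ y z := by
  have h := hρ 3 (by norm_num) ![x, y, z] ![1, 1, -2]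
    (by norm_num [Fin.sum_univ_three, Matrix.cons_val_two])
  simp only [Fin.sum_univ_three, Matrix.cons_val_zero, Matrix.cons_val_one,
    Matrix.cons_val_two, Matrix.head_cons, Matrix.tail_cons, hself] at h
  rw [hsymm y x, hsymm z x, hsymm z y] at h
  linarith

variable [MeasurableSpace X]

theorem integrable_prod_of_le_two_mul_add_two_mul {ρ : X → X → ℝ}
    (hmeas : Measurable fun p : X × X => ρ p.1 p.2) (hnonneg : ∀ x y, 0 ≤ ρ x y) {z₀ : X}
    (hbound : ∀ x y, ρ x y ≤ 2 * ρ x z₀ + 2 * ρ y z₀)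
    {μ ν : Measure X} [IsFiniteMeasure μ] [IsFiniteMeasure ν]
    (hμ : Integrable (fun z => ρ z z₀) μ) (hν : Integrable (fun z => ρ z z₀) ν) :
    Integrable (fun p : X × X => ρ p.1 p.2) (μ.prod ν) := by
  refine Integrable.mono' (((hμ.comp_fst ν).const_mul 2).add ((hν.comp_snd μ).const_mul 2))
    hmeas.aestronglyMeasurable (Filter.Eventually.of_forall fun p => ?_)
  rw [Real.norm_of_nonneg (hnonneg _ _)]
  exact hbound p.1 p.2

theorem integral_distanceKernel {ρ : X → X → ℝ} {z₀ : X} {μ ν : Measure X}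
    [IsProbabilityMeasure μ] [IsProbabilityMeasure ν]
    (hμ : Integrable (fun z => ρ z z₀) μ) (hν : Integrable (fun z => ρ z z₀) ν)
    (hρ : Integrable (fun p : X × X => ρ p.1 p.2) (μ.prod ν)) :
    ∫ p : X × X, distanceKernel ρ z₀ p.1 p.2 ∂(μ.prod ν)
      = ((∫ z, ρ z z₀ ∂μ) + (∫ z, ρ z z₀ ∂ν) - ∫ p : X × X, ρ p.1 p.2 ∂(μ.prod ν)) / 2 := by
  have hμ' := hμ.comp_fst ν
  have hν' := hν.comp_snd μ
  have hsum : Integrable (fun p : X × X => ρ p.1 z₀ + ρ p.2 z₀) (μ.prod ν) := hμ'.add hν'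
  simp only [distanceKernel]
  rw [integral_div, integral_sub hsum hρ, integral_add hμ' hν',
    integral_fun_fst (fun z => ρ z z₀), integral_fun_snd (fun z => ρ z z₀)]
  simp

end EnergyDistance

open EnergyDistance in
theorem energy_distance_eq_mmd_sq {X : Type*} [MeasurableSpace X]
    (ρ : X → X → ℝ) (hρ_meas : Measurable fun p : X × X => ρ p.1 p.2)
    (hρ_nonneg : ∀ x y, 0 ≤ ρ x y)
    (hρ_self : ∀ x, ρ x x = 0)
    (hρ_symm : ∀ x y, ρ x y = ρ y x)
    (hρ_negtype : ∀ (n : ℕ), 2 ≤ n → ∀ (x : Fin n → X) (a : Fin n → ℝ),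
      (∑ i, a i) = 0 → (∑ i, ∑ j, a i * a j * ρ (x i) (x j)) ≤ 0)
    (z₀ : X)
    (k : X → X → ℝ)
    (hk : ∀ x y, k x y = (ρ x z₀ + ρ y z₀ - ρ x y) / 2)
    (P Q : Measure X) [IsProbabilityMeasure P] [IsProbabilityMeasure Q]
    (hPmom : Integrable (fun z => ρ z z₀) P)
    (hQmom : Integrable (fun z => ρ z z₀) Q) :
    (∫ p : X × X, k p.1 p.2 ∂(P.prod P)) + (∫ p : X × X, k p.1 p.2 ∂(Q.prod Q))
        - 2 * ∫ p : X × X, k p.1 p.2 ∂(P.prod Q)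
      = (∫ p : X × X, ρ p.1 p.2 ∂(P.prod Q))
        - (1 / 2) * (∫ p : X × X, ρ p.1 p.2 ∂(P.prod P))
        - (1 / 2) * (∫ p : X × X, ρ p.1 p.2 ∂(Q.prod Q)) := by
  obtain rfl : k = distanceKernel ρ z₀ := funext₂ hk
  have hneg : IsNegativeType ρ := hρ_negtype
  have hbound := hneg.le_two_mul_add_two_mul hρ_self hρ_symm
  have hint := fun (μ ν : Measure X) [IsFiniteMeasure μ] [IsFiniteMeasure ν] =>
    integrable_prod_of_le_two_mul_add_two_mul (μ := μ) (ν := ν) hρ_meas hρ_nonneg (hbound · · z₀)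
  rw [integral_distanceKernel hPmom hPmom (hint P P hPmom hPmom),
    integral_distanceKernel hQmom hQmom (hint Q Q hQmom hQmom),
    integral_distanceKernel hPmom hQmom (hint P Q hPmom hQmom)]
  ring
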